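/- The sum of the q largest eigenvalues of a Hermitian matrix X equals the maximum of ∑_{j=1}^q ⟨v_j, X v_j⟩ over all orthonormal families v_1, ..., v_q (Ky Fan maximum principle). -/

import Mathlib

/-! Expand each `w j` in an orthonormal eigenbasis `b` of `T`: the Rayleigh sum
`∑ j, re ⟪w j, T (w j)⟫` becomes `∑ i, μ i * c i` with `c i = ∑ j, ‖⟪b i, w j⟫‖ ^ 2`.
Bessel's inequality gives `c i ≤ 1` and Parseval's identity gives `∑ i, c i = q`; for decreasing
`μ`, such a weighted sum is at most the sum of the first `q` values of `μ`.
The first `q` eigenvectors attain this bound. -/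

open Matrix

/-- The sum of the `q` largest values of the finite family `μ` (sorted decreasingly). -/
noncomputable def psum {n : ℕ} (μ : Fin n → ℝ) (q : ℕ) : ℝ :=
  ∑ j ∈ Finset.univ.filter (fun j : Fin n => (j : ℕ) < q),
    μ (Tuple.sort (fun i => -μ i) j)

/-- The sum of the `q` largest eigenvalues of a Hermitian matrix (junk value `0` if the
matrix is not Hermitian). -/
noncomputable def eigPsum {n : ℕ} (X : Matrix (Fin n) (Fin n) ℂ) (q : ℕ) : ℝ :=
  if hX : X.IsHermitian then psum hX.eigenvalues q else 0

open Finset RCLike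
open scoped InnerProductSpace

theorem Fin.sum_filter_val_lt_eq_sum_castLE {M : Type*} [AddCommMonoid M] {n q : ℕ} (hq : q ≤ n)
    (f : Fin n → M) :
    ∑ i ∈ univ.filter (fun i : Fin n => (i : ℕ) < q), f i = ∑ j : Fin q, f (Fin.castLE hq j) := by
  have : univ.filter (fun i : Fin n => (i : ℕ) < q) = univ.map (Fin.castLEEmb hq) := by
    ext i
    simp only [mem_filter, mem_univ, true_and, mem_map, Fin.coe_castLEEmb]
    exact ⟨fun h => ⟨⟨i, h⟩, rfl⟩, by rintro ⟨j, rfl⟩; exact j.2⟩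
  rw [this, sum_map]
  rfl

variable {𝕜 E : Type*} [RCLike 𝕜] [NormedAddCommGroup E] [InnerProductSpace 𝕜 E]

theorem OrthonormalBasis.re_inner_map_self_eq_sum {ι : Type*} [Fintype ι]
    (b : OrthonormalBasis ι 𝕜 E) {T : E →ₗ[𝕜] E} {μ : ι → ℝ}
    (hb : ∀ i, T (b i) = (μ i : 𝕜) • b i) (x : E) :
    re ⟪x, T x⟫_𝕜 = ∑ i, μ i * ‖⟪b i, x⟫_𝕜‖ ^ 2 := by
  have hTx : T x = ∑ i, ((μ i : 𝕜) * ⟪b i, x⟫_𝕜) • b i := by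
    conv_lhs => rw [← b.sum_repr' x]
    simp only [map_sum, map_smul, hb, smul_smul, mul_comm]
  rw [hTx, inner_sum, map_sum]
  refine sum_congr rfl fun i _ => ?_
  rw [inner_smul_right, ← inner_conj_symm, mul_assoc, RCLike.conj_mul, RCLike.norm_conj]
  norm_cast

theorem sum_mul_le_sum_filter_val_lt_of_antitone {n q : ℕ} {μ c : Fin n → ℝ} (hμ : Antitone μ)
    (hc₀ : ∀ i, 0 ≤ c i) (hc₁ : ∀ i, c i ≤ 1) (hc : ∑ i, c i = q) :
    ∑ i, μ i * c i ≤ ∑ i ∈ univ.filter (fun i : Fin n => (i : ℕ) < q), μ i := by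
  obtain rfl | hq := q.eq_zero_or_pos
  · have hc0 : ∀ i, c i = 0 := fun i =>
      (sum_eq_zero_iff_of_nonneg fun i _ => hc₀ i).mp (by exact_mod_cast hc) i (mem_univ i)
    simp [hc0]
  have hqn : q ≤ n := by
    have := sum_le_sum fun i (_ : i ∈ univ) => hc₁ i
    rw [hc] at this
    simpa using this
  -- `t` separates the `q` largest values of `μ` from the others.
  set t := μ ⟨q - 1, by omega⟩
  have hcard : (univ.filter (fun i : Fin n => (i : ℕ) < q)).card = q := by
    simpa using Fin.sum_filter_val_lt_eq_sum_castLE hqn (fun _ => (1 : ℕ))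
  have key : ∀ i, (μ i - t) * c i ≤ if (i : ℕ) < q then μ i - t else 0 := by
    intro i
    split_ifs with hi
    · have : t ≤ μ i := hμ (Fin.le_def.mpr (by dsimp only; omega))
      nlinarith [hc₁ i]
    · have : μ i ≤ t := hμ (Fin.le_def.mpr (by dsimp only; omega))
      nlinarith [hc₀ i]
  have := sum_le_sum fun i (_ : i ∈ univ) => key i
  rw [← sum_filter, sum_sub_distrib, sum_const, hcard, nsmul_eq_mul] at this
  simp only [sub_mul, sum_sub_distrib, ← mul_sum, hc] at this
  linarith

section KyFan

variable {n q : ℕ} (b : OrthonormalBasis (Fin n) 𝕜 E) {T : E →ₗ[𝕜] E} {μ : Fin n → ℝ}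

theorem OrthonormalBasis.sum_re_inner_map_self_le (hμ : Antitone μ)
    (hb : ∀ i, T (b i) = (μ i : 𝕜) • b i) {w : Fin q → E} (hw : Orthonormal 𝕜 w) :
    ∑ j, re ⟪w j, T (w j)⟫_𝕜 ≤ ∑ i ∈ univ.filter (fun i : Fin n => (i : ℕ) < q), μ i := by
  set c : Fin n → ℝ := fun i => ∑ j, ‖⟪b i, w j⟫_𝕜‖ ^ 2
  have hc₁ : ∀ i, c i ≤ 1 := fun i => by
    simpa [c, norm_inner_symm] using hw.sum_inner_products_le (s := univ) (b i)
  have hc : ∑ i, c i = q := by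
    simp [c, sum_comm (γ := Fin n), b.sum_sq_norm_inner_right, hw.1]
  calc ∑ j, re ⟪w j, T (w j)⟫_𝕜 = ∑ i, μ i * c i := by
        simp only [b.re_inner_map_self_eq_sum hb, c, mul_sum]
        exact sum_comm
    _ ≤ _ := sum_mul_le_sum_filter_val_lt_of_antitone hμ (fun i => by positivity) hc₁ hc

theorem OrthonormalBasis.isGreatest_sum_re_inner_map_self (hq : q ≤ n) (hμ : Antitone μ)
    (hb : ∀ i, T (b i) = (μ i : 𝕜) • b i) :
    IsGreatest {r | ∃ w : Fin q → E, Orthonormal 𝕜 w ∧ r = ∑ j, re ⟪w j, T (w j)⟫_𝕜}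
      (∑ i ∈ univ.filter (fun i : Fin n => (i : ℕ) < q), μ i) := by
  refine ⟨⟨fun j => b (Fin.castLE hq j), b.orthonormal.comp _ (Fin.castLE_injective hq), ?_⟩, ?_⟩
  · rw [Fin.sum_filter_val_lt_eq_sum_castLE hq]
    refine sum_congr rfl fun j _ => ?_
    simp [hb, inner_smul_right, b.orthonormal.1]
  · rintro r ⟨w, hw, rfl⟩
    exact b.sum_re_inner_map_self_le hμ hb hw

end KyFan

theorem Tuple.antitone_comp_sort_neg {n : ℕ} (μ : Fin n → ℝ) :
    Antitone (μ ∘ Tuple.sort (fun i => -μ i)) :=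
  fun _ _ hij => by simpa using Tuple.monotone_sort (fun i => -μ i) hij

namespace Matrix

variable {m ι : Type*} [Fintype m]

theorem orthonormal_toLp_iff [DecidableEq ι] {v : ι → m → 𝕜} :
    Orthonormal 𝕜 (fun j => WithLp.toLp 2 (v j)) ↔
      ∀ i j, star (v i) ⬝ᵥ v j = if i = j then 1 else 0 := by
  simp only [orthonormal_iff_ite, EuclideanSpace.inner_toLp_toLp, dotProduct_comm]

variable [DecidableEq m]

theorem inner_toLp_toEuclideanLin_toLp (A : Matrix m m 𝕜) (x : m → 𝕜) :
    ⟪WithLp.toLp 2 x, toEuclideanLin A (WithLp.toLp 2 x)⟫_𝕜 = star x ⬝ᵥ A *ᵥ x := by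
  rw [toLpLin_apply, EuclideanSpace.inner_toLp_toLp, dotProduct_comm]

theorem setOf_sum_re_star_dotProduct_mulVec_eq [DecidableEq ι] [Fintype ι] (A : Matrix m m 𝕜) :
    {r : ℝ | ∃ v : ι → m → 𝕜, (∀ i j, star (v i) ⬝ᵥ v j = if i = j then 1 else 0) ∧
        r = ∑ j, re (star (v j) ⬝ᵥ A *ᵥ v j)} =
      {r | ∃ w : ι → EuclideanSpace 𝕜 m, Orthonormal 𝕜 w ∧
        r = ∑ j, re ⟪w j, toEuclideanLin A (w j)⟫_𝕜} := by
  ext r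
  constructor
  · rintro ⟨v, hv, rfl⟩
    exact ⟨fun j => WithLp.toLp 2 (v j), orthonormal_toLp_iff.mpr hv,
      by simp only [inner_toLp_toEuclideanLin_toLp]⟩
  · rintro ⟨w, hw, rfl⟩
    exact ⟨fun j => WithLp.ofLp (w j), orthonormal_toLp_iff.mp hw,
      by simp only [← inner_toLp_toEuclideanLin_toLp, WithLp.toLp_ofLp]⟩

theorem IsHermitian.toEuclideanLin_eigenvectorBasis {A : Matrix m m 𝕜} (hA : A.IsHermitian)
    (i : m) :
    toEuclideanLin A (hA.eigenvectorBasis i) = (hA.eigenvalues i : 𝕜) • hA.eigenvectorBasis i := by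
  rw [toLpLin_apply, hA.mulVec_eigenvectorBasis, RCLike.real_smul_eq_coe_smul (K := 𝕜)]
  rfl

end Matrix

/-- Ky Fan maximum principle: the sum of the `q` largest eigenvalues of a
Hermitian matrix `X` is the maximum of `∑ j, ⟨v j, X (v j)⟩` over all orthonormal families
`v 1, …, v q`. -/
theorem kyFan_max_principle {n : ℕ} (X : Matrix (Fin n) (Fin n) ℂ)
    (hX : X.IsHermitian) (q : ℕ) (hq : q ≤ n) :
    IsGreatest
      {r : ℝ | ∃ v : Fin q → (Fin n → ℂ),
        (∀ i j, star (v i) ⬝ᵥ v j = if i = j then (1 : ℂ) else 0) ∧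
        r = ∑ j, (star (v j) ⬝ᵥ X.mulVec (v j)).re}
      (eigPsum X q) := by
  set σ := Tuple.sort (fun i => -hX.eigenvalues i)
  have h := (hX.eigenvectorBasis.reindex σ.symm).isGreatest_sum_re_inner_map_self hq
    (Tuple.antitone_comp_sort_neg hX.eigenvalues) fun i => by
      simpa using hX.toEuclideanLin_eigenvectorBasis (σ i)
  rw [← Matrix.setOf_sum_re_star_dotProduct_mulVec_eq] at h
  rwa [eigPsum, dif_pos hX, psum]
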